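/- arXiv:2602.04523 — 4 statements merged into one kernel-verified Lean document; each statement's English description precedes it below -/
import Mathlib

section
/- For all indices i ≠ j with 1 ≤ i, j ≤ s and m_i ≤ m_j, the string β_i is not a prefix of β_j; in particular, the family β_1, …, β_s is prefix-free. -/
private lemma aux_lt_div_succ_mul (a b : ℕ) (hb : 0 < b) : a < (a / b + 1) * b := by
  calc a = b * (a / b) + a % b := (Nat.div_add_mod a b).symm
    _ < b * (a / b) + b := Nat.add_lt_add_left (Nat.mod_lt a hb) _
    _ = (a / b + 1) * b := by ring

private lemma aux_digits_ext (d : ℕ) (hd : 2 ≤ d) :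
    ∀ (m u w : ℕ), u < d ^ m → w < d ^ m →
      (∀ p, p < m → u / d ^ p % d = w / d ^ p % d) → u = w := by
  intro m
  induction m with
  | zero =>
    intro u w hu hw _
    simp only [pow_zero, Nat.lt_one_iff] at hu hw
    omega
  | succ m ih =>
    intro u w hu hw h
    have h0 := h 0 (by omega)
    simp only [pow_zero, Nat.div_one] at h0
    have hq : u / d = w / d := by
      apply ih
      · exact Nat.div_lt_of_lt_mul (by rw [pow_succ'] at hu; exact hu)
      · exact Nat.div_lt_of_lt_mul (by rw [pow_succ'] at hw; exact hw)
      · intro p hp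
        have := h (p + 1) (by omega)
        rw [pow_succ'] at this
        rw [← Nat.div_div_eq_div_mul, ← Nat.div_div_eq_div_mul] at this
        exact this
    have hu' := Nat.div_add_mod u d
    have hw' := Nat.div_add_mod w d
    rw [← hq] at hw'
    omega

/-- With `d ≥ 2` and integers `1 = x 1 < x 2 < ⋯ < x (s+1) = n`, set
`m i = ⌊log_d (n / (x (i+1) − x i))⌋ + 2` and let `β i` be the length-`m i` base-`d` digit
string (most significant digit first) whose value is `⌊d^(m i) · (x i + x (i+1)) / (d·n)⌋`,
i.e. the first `m i` digits to the right of the base-`d` point of `(x i + x (i+1))/(d·n)`.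
Then for all `1 ≤ i, j ≤ s` with `i ≠ j`, `β i` is not a prefix of `β j`; in particular,
the family `β 1, …, β s` is prefix-free.  (Note that `Nat.log d (n / (x (i+1) - x i))`,
with natural division, equals `⌊log_d (n / (x (i+1) − x i))⌋` with real division, and
`d ^ m i * (x i + x (i+1)) / (d * n)`, with natural division, equals
`⌊d^(m i) · (x i + x (i+1)) / (d·n)⌋`.) -/
theorem beta_prefix_free (d s n : ℕ) (hd : 2 ≤ d) (hs : 1 ≤ s) (x : ℕ → ℕ)
    (hx1 : x 1 = 1) (hxn : x (s + 1) = n)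
    (hmono : ∀ a, 1 ≤ a → a ≤ s → x a < x (a + 1))
    (m : ℕ → ℕ) (hm : ∀ i, m i = Nat.log d (n / (x (i + 1) - x i)) + 2)
    (β : ℕ → List ℕ)
    (hβ : ∀ i, β i = (List.range (m i)).map
      (fun j => d ^ m i * (x i + x (i + 1)) / (d * n) / d ^ (m i - 1 - j) % d))
    (i j : ℕ) (hi : 1 ≤ i) (hi' : i ≤ s) (hj : 1 ≤ j) (hj' : j ≤ s) (hij : i ≠ j) :
    ¬ (β i <+: β j) := by
  intro hpre
  -- monotonicity
  have hle : ∀ a b : ℕ, 1 ≤ a → a ≤ b → b ≤ s + 1 → x a ≤ x b := by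
    intro a b ha hab hb
    induction b, hab using Nat.le_induction with
    | base => exact le_rfl
    | succ b hab ih =>
      have h1 : x a ≤ x b := ih (by omega)
      have h2 : x b < x (b + 1) := hmono b (by omega) (by omega)
      omega
  have hn2 : 2 ≤ n := by
    have h1 : x 1 < x 2 := hmono 1 le_rfl hs
    have h2 : x 2 ≤ x (s + 1) := hle 2 (s + 1) (by omega) (by omega) le_rfl
    omega
  have hxin : x (i + 1) ≤ n := hxn ▸ hle (i + 1) (s + 1) (by omega) (by omega) le_rfl
  have hxjn : x (j + 1) ≤ n := hxn ▸ hle (j + 1) (s + 1) (by omega) (by omega) le_rfl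
  have hxi : x i < x (i + 1) := hmono i hi hi'
  have hxj : x j < x (j + 1) := hmono j hj hj'
  have hx1le : ∀ a, 1 ≤ a → a ≤ s + 1 → 1 ≤ x a := fun a ha ha' => hx1 ▸ hle 1 a le_rfl ha ha'
  -- abbreviations
  set Ai := x i + x (i + 1) with hAi
  set Aj := x j + x (j + 1) with hAj
  set t := x (i + 1) - x i with ht
  have htpos : 0 < t := by omega
  have hdn : 0 < d * n := by positivity
  have hAidn : Ai < d * n := by
    calc Ai < 2 * n := by omega
      _ ≤ d * n := Nat.mul_le_mul_right n hd
  have hAjdn : Aj < d * n := by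
    calc Aj < 2 * n := by omega
      _ ≤ d * n := Nat.mul_le_mul_right n hd
  -- prefix consequences
  have hlen : m i ≤ m j := by
    have := hpre.length_le
    rwa [hβ i, hβ j, List.length_map, List.length_map, List.length_range,
      List.length_range] at this
  have hdig : ∀ l, l < m i →
      d ^ m i * Ai / (d * n) / d ^ (m i - 1 - l) % d
        = d ^ m j * Aj / (d * n) / d ^ (m j - 1 - l) % d := by
    intro l hl
    have hl1 : l < (β i).length := by
      rw [hβ i, List.length_map, List.length_range]; exact hl
    have := hpre.getElem hl1
    simp only [hβ i, hβ j, List.getElem_map, List.getElem_range] at this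
    exact this
  set Ni := d ^ m i * Ai / (d * n) with hNi
  set Nj := d ^ m j * Aj / (d * n) with hNj
  set W := d ^ m i * Aj / (d * n) with hW
  have hWeq : Nj / d ^ (m j - m i) = W := by
    rw [hNj, Nat.div_div_eq_div_mul, hW]
    have : d ^ m j * Aj = d ^ (m j - m i) * (d ^ m i * Aj) := by
      rw [← mul_assoc, ← pow_add]
      congr 2
      omega
    rw [this, mul_comm (d * n) (d ^ (m j - m i)),
      Nat.mul_div_mul_left _ _ (by positivity)]
  have hNilt : Ni < d ^ m i := by
    rw [hNi]
    apply Nat.div_lt_of_lt_mul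
    calc d ^ m i * Ai < d ^ m i * (d * n) :=
          mul_lt_mul_of_pos_left hAidn (by positivity)
      _ = d * n * d ^ m i := by ring
  have hWlt : W < d ^ m i := by
    rw [hW]
    apply Nat.div_lt_of_lt_mul
    calc d ^ m i * Aj < d ^ m i * (d * n) :=
          mul_lt_mul_of_pos_left hAjdn (by positivity)
      _ = d * n * d ^ m i := by ring
  -- Ni = W
  have hNiW : Ni = W := by
    apply aux_digits_ext d hd (m i) Ni W hNilt hWlt
    intro p hp
    have hl := hdig (m i - 1 - p) (by omega)
    have e1 : m i - 1 - (m i - 1 - p) = p := by omega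
    have e2 : m j - 1 - (m i - 1 - p) = m j - m i + p := by omega
    have e3 : Nj / d ^ (m j - m i) / d ^ p = Nj / d ^ (m j - m i + p) := by
      rw [Nat.div_div_eq_div_mul, ← pow_add]
    rw [e1, e2] at hl
    rw [← hWeq, e3]
    exact hl
  -- from equal floors, small difference
  have hdiff : (d ^ m i * Ai) - (d ^ m i * Aj) < d * n ∧
      (d ^ m i * Aj) - (d ^ m i * Ai) < d * n := by
    have e1 := Nat.div_add_mod (d ^ m i * Ai) (d * n)
    have e2 := Nat.div_add_mod (d ^ m i * Aj) (d * n)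
    have m1 := Nat.mod_lt (d ^ m i * Ai) hdn
    have m2 := Nat.mod_lt (d ^ m i * Aj) hdn
    rw [← hNi] at e1
    rw [← hW] at e2
    rw [hNiW] at e1
    omega
  -- |Ai - Aj| ≥ t
  have hAgap : Ai + t ≤ Aj ∨ Aj + t ≤ Ai := by
    rcases Nat.lt_or_ge i j with hlt | hge
    · left
      have h1 : x (i + 1) ≤ x j := hle (i + 1) j (by omega) (by omega) (by omega)
      have h2 : x (i + 1) ≤ x (j + 1) := hle (i + 1) (j + 1) (by omega) (by omega) (by omega)
      omega
    · right
      have hlt' : j < i := by omega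
      have h1 : x j ≤ x i := hle j i hj (by omega) (by omega)
      have h2 : x (j + 1) ≤ x i := hle (j + 1) i (by omega) (by omega) (by omega)
      omega
  have hkey : d ^ m i * t < d * n := by
    rcases hAgap with hg | hg
    · have : d ^ m i * Ai + d ^ m i * t ≤ d ^ m i * Aj := by
        rw [← Nat.mul_add]
        exact Nat.mul_le_mul_left _ hg
      omega
    · have : d ^ m i * Aj + d ^ m i * t ≤ d ^ m i * Ai := by
        rw [← Nat.mul_add]
        exact Nat.mul_le_mul_left _ hg
      omega
  -- lower bound on d ^ m i * t
  have hlog : n / t < d ^ (Nat.log d (n / t) + 1) := Nat.lt_pow_succ_log_self (by omega) _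
  have hfinal : d * n < d ^ m i * t := by
    have h1 : n < (n / t + 1) * t := aux_lt_div_succ_mul n t htpos
    have h2 : d ^ m i = d ^ (Nat.log d (n / t) + 1) * d := by
      rw [hm i, ← ht, ← pow_succ]
    have h3 : (n / t + 1) * d ≤ d ^ m i := by
      rw [h2]
      exact Nat.mul_le_mul_right d hlog
    calc d * n < d * ((n / t + 1) * t) :=
          mul_lt_mul_of_pos_left h1 (by omega)
      _ = (n / t + 1) * d * t := by ring
      _ ≤ d ^ m i * t := Nat.mul_le_mul_right t h3
  omega
end

section
/- For any 1 ≤ l < r ≤ s, there exist d' ≤ d strings v_1, …, v_{d'} over the alphabet {0, …, d−1}, each of length at least log_d(n/(x_r + x_{r+1} − x_l − x_{l+1})), such that: (a) each v_a is a prefix of some β_i with l ≤ i ≤ r; (b) every β_i with l ≤ i ≤ r has exactly one of v_1, …, v_{d'} as a prefix; and (c) for all 1 ≤ a < b ≤ d', the longest common prefix of v_a and v_b equals the longest common prefix of β_l and β_r. -/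
/-- The longest common prefix of two digit strings. -/
def lcp : List ℕ → List ℕ → List ℕ
  | a :: as, b :: bs => if a = b then a :: lcp as bs else []
  | _, _ => []

-- digit string, MSD first, of length t
def digitsOf (d t N : ℕ) : List ℕ := (List.range t).map (fun j => N / d ^ (t - 1 - j) % d)

@[simp] lemma digitsOf_length (d t N : ℕ) : (digitsOf d t N).length = t := by
  simp [digitsOf]

lemma digitsOf_getElem (d t N j : ℕ) (hj : j < t) :
    (digitsOf d t N)[j]'(by simpa using hj) = N / d ^ (t - 1 - j) % d := by
  simp [digitsOf]

lemma digitsOf_getElem' (d t N j : ℕ) (hj : j < (digitsOf d t N).length) :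
    (digitsOf d t N)[j] = N / d ^ (t - 1 - j) % d := by
  simp [digitsOf]

lemma digitsOf_mem_lt (d t N : ℕ) (hd : 0 < d) : ∀ c ∈ digitsOf d t N, c < d := by
  intro c hc
  simp only [digitsOf, List.mem_map] at hc
  obtain ⟨j, -, rfl⟩ := hc
  exact Nat.mod_lt _ hd

lemma digitsOf_prefix (d t u N : ℕ) (h : u ≤ t) :
    digitsOf d u (N / d ^ (t - u)) <+: digitsOf d t N := by
  have : digitsOf d u (N / d ^ (t - u)) = (digitsOf d t N).take u := by
    unfold digitsOf
    rw [← List.map_take, List.take_range, Nat.min_eq_left h]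
    apply List.map_congr_left
    intro j hj
    have hj' : j < u := List.mem_range.mp hj
    rw [Nat.div_div_eq_div_mul, ← pow_add]
    have he : t - u + (u - 1 - j) = t - 1 - j := by omega
    rw [he]
  rw [this]; exact List.take_prefix _ _

lemma digitsOf_succ (d t N : ℕ) :
    digitsOf d (t + 1) N = digitsOf d t (N / d) ++ [N % d] := by
  unfold digitsOf
  rw [List.range_succ, List.map_append]
  congr 1
  · apply List.map_congr_left
    intro j hj
    have hj' : j < t := List.mem_range.mp hj
    rw [Nat.div_div_eq_div_mul]
    have : d * d ^ (t - 1 - j) = d ^ (t + 1 - 1 - j) := by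
      rw [← pow_succ']
      congr 1
      omega
    rw [this]
  · simp

lemma digitsOf_inj (d t : ℕ) (hd : 1 < d) : ∀ N N', N < d ^ t → N' < d ^ t →
    digitsOf d t N = digitsOf d t N' → N = N' := by
  induction t with
  | zero => intro N N' h1 h2 _; simp at h1 h2; omega
  | succ t ih =>
    intro N N' h1 h2 heq
    rw [digitsOf_succ, digitsOf_succ] at heq
    have hlen : (digitsOf d t (N / d)).length = (digitsOf d t (N' / d)).length := by simp
    obtain ⟨he1, he2⟩ := List.append_inj heq hlen
    have hN : N / d < d ^ t := by
      rw [Nat.div_lt_iff_lt_mul (by omega)]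
      calc N < d ^ (t + 1) := h1
      _ = d ^ t * d := by rw [pow_succ]
    have hN' : N' / d < d ^ t := by
      rw [Nat.div_lt_iff_lt_mul (by omega)]
      calc N' < d ^ (t + 1) := h2
      _ = d ^ t * d := by rw [pow_succ]
    have h3 := ih (N / d) (N' / d) hN hN' he1
    have h4 : N % d = N' % d := by simpa using he2
    rw [← Nat.div_add_mod N d, ← Nat.div_add_mod N' d, h3, h4]

lemma lcp_prefix_left : ∀ a b : List ℕ, lcp a b <+: a := by
  intro a
  induction a with
  | nil => intro b; cases b <;> simp [lcp]
  | cons x as ih =>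
    intro b
    cases b with
    | nil => simp [lcp]
    | cons y bs =>
      by_cases h : x = y
      · simp only [lcp, if_pos h]
        exact List.cons_prefix_cons.mpr ⟨rfl, ih bs⟩
      · simp [lcp, h]

lemma lcp_prefix_right : ∀ a b : List ℕ, lcp a b <+: b := by
  intro a
  induction a with
  | nil => intro b; cases b <;> simp [lcp]
  | cons x as ih =>
    intro b
    cases b with
    | nil => simp [lcp]
    | cons y bs =>
      by_cases h : x = y
      · subst h
        simp only [lcp, if_pos rfl]
        exact List.cons_prefix_cons.mpr ⟨rfl, ih bs⟩
      · simp [lcp, h]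

lemma prefix_lcp : ∀ c a b : List ℕ, c <+: a → c <+: b → c <+: lcp a b := by
  intro c
  induction c with
  | nil => intro a b _ _; exact List.nil_prefix
  | cons x cs ih =>
    intro a b ha hb
    obtain ⟨ta, rfl⟩ := ha
    obtain ⟨tb, hb'⟩ := hb
    cases b with
    | nil => simp at hb'
    | cons y bs =>
      rw [List.cons_append] at hb'
      injection hb' with h1 h2
      subst h1
      simp only [List.cons_append, lcp, if_pos rfl]
      exact List.cons_prefix_cons.mpr ⟨rfl, ih _ _ ⟨ta, rfl⟩ ⟨tb, h2⟩⟩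

lemma lcp_length_le (j : ℕ) : ∀ a b : List ℕ, (hja : j < a.length) → (hjb : j < b.length) →
    a[j] ≠ b[j] → (lcp a b).length ≤ j := by
  induction j with
  | zero =>
    intro a b hja hjb hne
    cases a with
    | nil => simp at hja
    | cons x as =>
      cases b with
      | nil => simp at hjb
      | cons y bs =>
        have : x ≠ y := by simpa using hne
        simp [lcp, this]
  | succ j ih =>
    intro a b hja hjb hne
    cases a with
    | nil => simp at hja
    | cons x as =>
      cases b with
      | nil => simp at hjb
      | cons y bs =>
        by_cases h : x = y
        · simp only [lcp, if_pos h, List.length_cons]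
          have := ih as bs (by simpa using hja) (by simpa using hjb) (by simpa using hne)
          omega
        · simp [lcp, h]

lemma lcp_eq_of (w a b : List ℕ) (ha : w <+: a) (hb : w <+: b)
    (hla : w.length < a.length) (hlb : w.length < b.length)
    (hne : a[w.length] ≠ b[w.length]) : lcp a b = w :=
  ((prefix_lcp w a b ha hb).eq_of_length_le (lcp_length_le w.length a b hla hlb hne)).symm

lemma prefix_eq_of_length (u a b : List ℕ) (ha : a <+: u) (hb : b <+: u)
    (h : a.length = b.length) : a = b := by
  rw [List.prefix_iff_eq_take] at ha hb
  rw [ha, hb, h]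

/-- With `d ≥ 2` and integers `1 = x 1 < x 2 < ⋯ < x (s+1) = n`, set
`m i = ⌊log_d (n / (x (i+1) − x i))⌋ + 2` and let `β i` be the length-`m i` base-`d` digit
string (most significant digit first) of value `⌊d^(m i) · (x i + x (i+1)) / (d·n)⌋`.
For any `1 ≤ l < r ≤ s` there exist `d' ≤ d` strings `v 1, …, v d'` over `{0, …, d−1}`,
each of length at least `log_d (n / (x r + x (r+1) − x l − x (l+1)))`, such that
(a) each `v a` is a prefix of some `β i` with `l ≤ i ≤ r`;
(b) every `β i` with `l ≤ i ≤ r` has exactly one of the `v a` as a prefix; and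
(c) for all `1 ≤ a < b ≤ d'`, the longest common prefix of `v a` and `v b` equals the
longest common prefix of `β l` and `β r`. -/
theorem covering_nodes_exist (d s n : ℕ) (hd : 2 ≤ d) (hs : 1 ≤ s) (x : ℕ → ℕ)
    (hx1 : x 1 = 1) (hxn : x (s + 1) = n)
    (hmono : ∀ a, 1 ≤ a → a ≤ s → x a < x (a + 1))
    (m : ℕ → ℕ) (hm : ∀ i, m i = Nat.log d (n / (x (i + 1) - x i)) + 2)
    (β : ℕ → List ℕ)
    (hβ : ∀ i, β i = (List.range (m i)).map
      (fun j => d ^ m i * (x i + x (i + 1)) / (d * n) / d ^ (m i - 1 - j) % d))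
    (l r : ℕ) (hl : 1 ≤ l) (hlr : l < r) (hr : r ≤ s) :
    ∃ d' : ℕ, d' ≤ d ∧ ∃ v : ℕ → List ℕ,
      (∀ a, 1 ≤ a → a ≤ d' → (∀ c ∈ v a, c < d) ∧
        Real.logb d ((n : ℝ) / ((x r : ℝ) + (x (r + 1) : ℝ) - (x l : ℝ) - (x (l + 1) : ℝ)))
          ≤ ((v a).length : ℝ)) ∧
      (∀ a, 1 ≤ a → a ≤ d' → ∃ i, l ≤ i ∧ i ≤ r ∧ v a <+: β i) ∧
      (∀ i, l ≤ i → i ≤ r → ∃! a, (1 ≤ a ∧ a ≤ d') ∧ v a <+: β i) ∧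
      (∀ a b, 1 ≤ a → a < b → b ≤ d' → lcp (v a) (v b) = lcp (β l) (β r)) := by
  have hd1 : 1 < d := hd
  have hd0 : 0 < d := by omega
  -- monotonicity of x
  have hxmono : ∀ a b, 1 ≤ a → a ≤ b → b ≤ s + 1 → x a ≤ x b := by
    have key : ∀ b, b ≤ s + 1 → ∀ a, 1 ≤ a → a ≤ b → x a ≤ x b := by
      intro b
      induction b with
      | zero => intro _ a _ _; omega
      | succ b ih =>
        intro hb a ha hab
        rcases Nat.lt_or_ge a (b + 1) with h | h
        · have h1 : x a ≤ x b := ih (by omega) a ha (by omega)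
          have h2 : x b < x (b + 1) := hmono b (by omega) (by omega)
          omega
        · have heq : a = b + 1 := by omega
          rw [heq]
    exact fun a b ha hab hb => key b hb a ha hab
  have hn2 : 2 ≤ n := by
    have h1 : x 1 < x 2 := hmono 1 (by omega) hs
    have h2 : x 2 ≤ x (s + 1) := hxmono 2 (s + 1) (by omega) (by omega) (by omega)
    omega
  have hxle : ∀ j, 1 ≤ j → j ≤ s + 1 → x j ≤ n := by
    intro j hj1 hj2
    have := hxmono j (s + 1) hj1 hj2 (le_refl _)
    omega
  set D := d * n with hD
  have hD0 : 0 < D := by positivity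
  set X : ℕ → ℕ := fun i => x i + x (i + 1) with hXdef
  set N : ℕ → ℕ → ℕ := fun i t => d ^ t * X i / D with hNdef
  have hβd : ∀ i, β i = digitsOf d (m i) (N i (m i)) := fun i => by rw [hβ i]; rfl
  have hXlt : ∀ i, l ≤ i → i ≤ r → X i < D := by
    intro i h1 h2
    have g1 : x i < x (i + 1) := hmono i (by omega) (by omega)
    have g2 : x (i + 1) ≤ n := hxle (i + 1) (by omega) (by omega)
    have : X i = x i + x (i + 1) := rfl
    have hDn : 2 * n ≤ D := by
      rw [hD]; exact Nat.mul_le_mul_right n hd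
    omega
  have hXmono : ∀ i j, l ≤ i → i ≤ j → j ≤ r → X i ≤ X j := by
    intro i j h1 h2 h3
    have g1 : x i ≤ x j := hxmono i j (by omega) h2 (by omega)
    have g2 : x (i + 1) ≤ x (j + 1) := hxmono (i + 1) (j + 1) (by omega) (by omega) (by omega)
    have e1 : X i = x i + x (i + 1) := rfl
    have e2 : X j = x j + x (j + 1) := rfl
    omega
  have hXlr : X l < X r := by
    have g1 : x l < x (l + 1) := hmono l (by omega) (by omega)
    have g2 : x (l + 1) ≤ x r := hxmono (l + 1) r (by omega) (by omega) (by omega)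
    have g3 : x (l + 1) ≤ x (r + 1) := hxmono (l + 1) (r + 1) (by omega) (by omega) (by omega)
    have e1 : X l = x l + x (l + 1) := rfl
    have e2 : X r = x r + x (r + 1) := rfl
    omega
  set Δ := X r - X l with hΔdef
  have hΔpos : 0 < Δ := by omega
  have hXrl : X r = X l + Δ := by omega
  have hΔltD : Δ < D := by have := hXlt r (by omega) (le_refl r); omega
  have hgΔ : ∀ i, l ≤ i → i ≤ r → x (i + 1) - x i ≤ Δ := by
    intro i h1 h2
    have g1 : x (i + 1) ≤ x (r + 1) := hxmono (i + 1) (r + 1) (by omega) (by omega) (by omega)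
    have g2 : x l ≤ x i := hxmono l i (by omega) h1 (by omega)
    have g3 : x (l + 1) ≤ x r := hxmono (l + 1) r (by omega) (by omega) (by omega)
    have e1 : X l = x l + x (l + 1) := rfl
    have e2 : X r = x r + x (r + 1) := rfl
    omega
  have hgpos : ∀ i, l ≤ i → i ≤ r → 0 < x (i + 1) - x i := by
    intro i h1 h2
    have := hmono i (by omega) (by omega)
    omega
  -- division bounds
  have hdivle : ∀ a : ℕ, D * (a / D) ≤ a := by
    intro a
    have h1 := Nat.div_add_mod a D
    omega
  have hdivlt : ∀ a : ℕ, a < D * (a / D + 1) := by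
    intro a
    have h1 := Nat.div_add_mod a D
    have h2 := Nat.mod_lt a hD0
    calc a = D * (a / D) + a % D := h1.symm
    _ < D * (a / D) + D := by omega
    _ = D * (a / D + 1) := by ring
  have hNbound : ∀ i t, D * N i t ≤ d ^ t * X i ∧ d ^ t * X i < D * N i t + D := by
    intro i t
    refine ⟨hdivle _, ?_⟩
    have h := hdivlt (d ^ t * X i)
    have h2 : D * (d ^ t * X i / D + 1) = D * (d ^ t * X i / D) + D := by ring
    show d ^ t * X i < D * (d ^ t * X i / D) + D
    omega
  have hNdiv : ∀ i u t, t ≤ u → N i u / d ^ (u - t) = N i t := by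
    intro i u t h
    show d ^ u * X i / D / d ^ (u - t) = d ^ t * X i / D
    rw [Nat.div_div_eq_div_mul]
    have he : d ^ u * X i = d ^ t * X i * d ^ (u - t) := by
      rw [mul_comm (d ^ t) (X i), mul_assoc, ← pow_add]
      have : t + (u - t) = u := by omega
      rw [this, mul_comm]
    rw [he, Nat.mul_div_mul_right _ _ (pow_pos hd0 _)]
  have hNlt : ∀ i t, l ≤ i → i ≤ r → N i t < d ^ t := by
    intro i t h1 h2
    show d ^ t * X i / D < d ^ t
    rw [Nat.div_lt_iff_lt_mul hD0]
    exact Nat.mul_lt_mul_of_le_of_lt (Nat.le_refl _) (hXlt i h1 h2) (pow_pos hd0 _)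
  have hNmono : ∀ i j t, l ≤ i → i ≤ j → j ≤ r → N i t ≤ N j t := by
    intro i j t h1 h2 h3
    exact Nat.div_le_div_right (Nat.mul_le_mul_left _ (hXmono i j h1 h2 h3))
  -- the scale t0 and the lcp depth k
  set t0 := Nat.log d (D / Δ) with ht0def
  have hDΔ0 : D / Δ ≠ 0 := Nat.ne_of_gt (Nat.div_pos (le_of_lt hΔltD) hΔpos)
  have hPb' : ∀ j, N l j = N r j → d ^ j * Δ < D := by
    intro j hj
    have h1 := hNbound l j
    have h2 := hNbound r j
    rw [hj] at h1
    have h3 : d ^ j * X r = d ^ j * X l + d ^ j * Δ := by rw [hXrl, mul_add]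
    omega
  have hPbound : ∀ j, N l j = N r j → j ≤ t0 := by
    intro j hj
    have h1 : d ^ j * Δ < D := hPb' j hj
    have h2 : d ^ j ≤ D / Δ := (Nat.le_div_iff_mul_le hΔpos).mpr (le_of_lt h1)
    exact (Nat.le_log_iff_pow_le hd1 hDΔ0).mpr h2
  set k := Nat.findGreatest (fun j => N l j = N r j) t0 with hkdef
  have hkP : N l k = N r k := by
    have h0 : N l 0 = N r 0 := by
      show d ^ 0 * X l / D = d ^ 0 * X r / D
      rw [Nat.div_eq_of_lt (by simpa using hXlt l (le_refl l) (by omega)),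
        Nat.div_eq_of_lt (by simpa using hXlt r (by omega) (le_refl r))]
    exact Nat.findGreatest_spec (P := fun j => N l j = N r j) (Nat.zero_le t0) h0
  have hkle : k ≤ t0 := Nat.findGreatest_le t0
  have hknot : N l (k + 1) ≠ N r (k + 1) := by
    intro h
    have h1 : k + 1 ≤ t0 := hPbound (k + 1) h
    have h2 : k + 1 ≤ k := Nat.le_findGreatest h1 h
    omega
  have hClr : N l (k + 1) < N r (k + 1) :=
    lt_of_le_of_ne (hNmono l r (k + 1) (le_refl l) (by omega) (le_refl r)) hknot
  have hNik : ∀ i, l ≤ i → i ≤ r → N i k = N l k := by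
    intro i h1 h2
    have g1 := hNmono l i k (le_refl l) h1 h2
    have g2 := hNmono i r k h1 h2 (le_refl r)
    omega
  have hCd : ∀ i, l ≤ i → i ≤ r → N i (k + 1) / d = N l k := by
    intro i h1 h2
    have := hNdiv i (k + 1) k (by omega)
    simp only [Nat.add_sub_cancel_left, Nat.succ_sub (le_refl k), Nat.sub_self, pow_one] at this
    rw [← hNik i h1 h2]
    simpa using this
  have hdkΔ : d ^ k * Δ < D := hPb' k hkP
  -- k + 1 ≤ m i
  have hkm : ∀ i, l ≤ i → i ≤ r → k + 1 ≤ m i := by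
    intro i h1 h2
    set g := x (i + 1) - x i with hgdef
    have hg1 : 1 ≤ g := hgpos i h1 h2
    have hg2 : g ≤ Δ := hgΔ i h1 h2
    have hgn : g ≤ n := by
      have := hxle (i + 1) (by omega) (by omega)
      omega
    have hng0 : n / g ≠ 0 := Nat.ne_of_gt (Nat.div_pos hgn (by omega))
    rcases Nat.eq_zero_or_pos k with h | h
    · rw [hm i]; omega
    · have h3 : d ^ k * g < D := lt_of_le_of_lt (Nat.mul_le_mul_left _ hg2) hdkΔ
      have h4 : d * (d ^ (k - 1) * g) < d * n := by
        have : d * (d ^ (k - 1) * g) = d ^ k * g := by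
          rw [← mul_assoc, ← pow_succ']
          congr 2
          omega
        rw [this]; exact h3
      have h5 : d ^ (k - 1) * g < n := lt_of_mul_lt_mul_left h4 (Nat.zero_le d)
      have h6 : d ^ (k - 1) ≤ n / g := (Nat.le_div_iff_mul_le (by omega)).mpr (le_of_lt h5)
      have h7 : k - 1 ≤ Nat.log d (n / g) := (Nat.le_log_iff_pow_le hd1 hng0).mpr h6
      rw [hm i, ← hgdef]
      omega
  -- prefix lemma for β
  have hpre : ∀ i t', t' ≤ m i → digitsOf d t' (N i t') <+: β i := by
    intro i t' ht'
    rw [hβd i]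
    have h1 := digitsOf_prefix d (m i) t' (N i (m i)) ht'
    rwa [hNdiv i (m i) t' ht'] at h1
  -- β i position k digit
  have hβpos : ∀ i, l ≤ i → i ≤ r → ∀ hki : k < (β i).length, (β i)[k] = N i (k + 1) % d := by
    intro i h1 h2 hki
    have hkm' : k + 1 ≤ m i := hkm i h1 h2
    have e := List.getElem_of_eq (hβd i) hki
    rw [e, digitsOf_getElem']
    have he : m i - 1 - k = m i - (k + 1) := by omega
    rw [he, hNdiv i (m i) (k + 1) hkm']
  have hβlen : ∀ i, (β i).length = m i := by
    intro i; rw [hβd i]; simp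
  -- w = lcp (β l) (β r)
  set w := digitsOf d k (N l k) with hwdef
  have hwβ : ∀ i, l ≤ i → i ≤ r → w <+: β i := by
    intro i h1 h2
    have h3 := hpre i k (by have := hkm i h1 h2; omega)
    rwa [hNik i h1 h2] at h3
  have hwlen : w.length = k := by rw [hwdef]; simp
  have hmodne : N l (k + 1) % d ≠ N r (k + 1) % d := by
    have d1 := Nat.div_add_mod (N l (k + 1)) d
    have d2 := Nat.div_add_mod (N r (k + 1)) d
    have c1 := hCd l (le_refl l) (by omega)
    have c2 := hCd r (by omega) (le_refl r)
    rw [c1] at d1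
    rw [c2] at d2
    intro hmod
    apply hknot
    omega
  have hlcpβ : lcp (β l) (β r) = w := by
    have hkl : k < (β l).length := by rw [hβlen l]; have := hkm l (le_refl l) (by omega); omega
    have hkr : k < (β r).length := by rw [hβlen r]; have := hkm r (by omega) (le_refl r); omega
    have hla : w.length < (β l).length := by rw [hwlen]; exact hkl
    have hlb : w.length < (β r).length := by rw [hwlen]; exact hkr
    refine lcp_eq_of w (β l) (β r) (hwβ l (le_refl l) (by omega))
      (hwβ r (by omega) (le_refl r)) hla hlb ?_
    simp only [hwlen]
    rw [hβpos l (le_refl l) (by omega) hkl, hβpos r (by omega) (le_refl r) hkr]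
    exact hmodne
  -- shared length lemma
  have hlogb : ∀ len : ℕ, n ≤ d ^ len * Δ →
      Real.logb d ((n : ℝ) / ((x r : ℝ) + (x (r + 1) : ℝ) - (x l : ℝ) - (x (l + 1) : ℝ)))
        ≤ (len : ℝ) := by
    intro len hlen
    have hΔR : ((x r : ℝ) + (x (r + 1) : ℝ) - (x l : ℝ) - (x (l + 1) : ℝ)) = (Δ : ℝ) := by
      have h1 : X l ≤ X r := le_of_lt hXlr
      have hc : (Δ : ℝ) = (X r : ℝ) - (X l : ℝ) := by
        rw [hΔdef]; exact Nat.cast_sub h1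
      have e1 : X r = x r + x (r + 1) := rfl
      have e2 : X l = x l + x (l + 1) := rfl
      rw [hc, e1, e2]
      push_cast
      ring
    rw [hΔR]
    have hΔR0 : (0 : ℝ) < (Δ : ℝ) := by exact_mod_cast hΔpos
    have hn0 : (0 : ℝ) < (n : ℝ) / (Δ : ℝ) := by positivity
    have hdR : (1 : ℝ) < (d : ℝ) := by exact_mod_cast hd1
    rw [Real.logb_le_iff_le_rpow hdR hn0, Real.rpow_natCast, div_le_iff₀ hΔR0]
    exact_mod_cast hlen
  by_cases hcase : n ≤ d ^ (k + 1) * Δ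
  · -- CASE A: use all children of w at depth k+1
    set F := (Finset.Icc l r).image (fun i => N i (k + 1)) with hFdef
    set L := F.sort (· ≤ ·) with hLdef
    have hLlen : L.length = F.card := Finset.length_sort _
    have hLnd : L.Nodup := Finset.sort_nodup _ _
    have hmemL : ∀ P, P ∈ L ↔ ∃ i, l ≤ i ∧ i ≤ r ∧ N i (k + 1) = P := by
      intro P
      rw [hLdef, Finset.mem_sort, hFdef, Finset.mem_image]
      constructor
      · rintro ⟨i, hi, he⟩
        rw [Finset.mem_Icc] at hi
        exact ⟨i, hi.1, hi.2, he⟩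
      · rintro ⟨i, h1, h2, he⟩
        exact ⟨i, Finset.mem_Icc.mpr ⟨h1, h2⟩, he⟩
    have hcard : L.length ≤ d := by
      rw [hLlen]
      have hFsub : F ⊆ Finset.Icc (N l (k + 1)) (N r (k + 1)) := by
        intro P hP
        rw [hFdef, Finset.mem_image] at hP
        obtain ⟨i, hi, he⟩ := hP
        rw [Finset.mem_Icc] at hi
        rw [Finset.mem_Icc, ← he]
        exact ⟨hNmono l i (k + 1) (le_refl l) hi.1 hi.2, hNmono i r (k + 1) hi.1 hi.2 (le_refl r)⟩
      calc F.card ≤ (Finset.Icc (N l (k + 1)) (N r (k + 1))).card := Finset.card_le_card hFsub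
      _ = N r (k + 1) + 1 - N l (k + 1) := Nat.card_Icc _ _
      _ ≤ d := by
          have d1 := Nat.div_add_mod (N l (k + 1)) d
          have d2 := Nat.div_add_mod (N r (k + 1)) d
          have c1 := hCd l (le_refl l) (by omega)
          have c2 := hCd r (by omega) (le_refl r)
          rw [c1] at d1
          rw [c2] at d2
          have m2 : N r (k + 1) % d < d := Nat.mod_lt _ hd0
          omega
    have hLval : ∀ idx, (h : idx < L.length) → ∃ i, l ≤ i ∧ i ≤ r ∧ N i (k + 1) = L[idx] := by
      intro idx h
      exact (hmemL _).mp (List.getElem_mem h)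
    have hvlt : ∀ idx, (h : idx < L.length) → L[idx] < d ^ (k + 1) := by
      intro idx h
      obtain ⟨i, h1, h2, he⟩ := hLval idx h
      rw [← he]
      exact hNlt i (k + 1) h1 h2
    have hvdiv : ∀ idx, (h : idx < L.length) → L[idx] / d = N l k := by
      intro idx h
      obtain ⟨i, h1, h2, he⟩ := hLval idx h
      rw [← he]
      exact hCd i h1 h2
    refine ⟨L.length, hcard, fun a => digitsOf d (k + 1) (L.getD (a - 1) 0), ?_, ?_, ?_, ?_⟩
    · intro a ha1 ha2
      constructor
      · exact digitsOf_mem_lt d (k + 1) _ hd0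
      · rw [digitsOf_length]
        exact hlogb (k + 1) hcase
    · intro a ha1 ha2
      have hidx : a - 1 < L.length := by omega
      obtain ⟨i, h1, h2, he⟩ := hLval (a - 1) hidx
      refine ⟨i, h1, h2, ?_⟩
      show digitsOf d (k + 1) (L.getD (a - 1) 0) <+: β i
      rw [List.getD_eq_getElem L 0 hidx, ← he]
      exact hpre i (k + 1) (hkm i h1 h2)
    · intro i h1 h2
      have hP : N i (k + 1) ∈ L := (hmemL _).mpr ⟨i, h1, h2, rfl⟩
      obtain ⟨idx, hidx, heq⟩ := List.getElem_of_mem hP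
      refine ⟨idx + 1, ⟨⟨by omega, by omega⟩, ?_⟩, ?_⟩
      · show digitsOf d (k + 1) (L.getD (idx + 1 - 1) 0) <+: β i
        have : idx + 1 - 1 = idx := by omega
        rw [this, List.getD_eq_getElem L 0 hidx, heq]
        exact hpre i (k + 1) (hkm i h1 h2)
      · rintro b ⟨⟨hb1, hb2⟩, hbpre⟩
        have hbidx : b - 1 < L.length := by omega
        have hapre : digitsOf d (k + 1) (L.getD (idx + 1 - 1) 0) <+: β i := by
          have : idx + 1 - 1 = idx := by omega
          rw [this, List.getD_eq_getElem L 0 hidx, heq]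
          exact hpre i (k + 1) (hkm i h1 h2)
        have heq2 : digitsOf d (k + 1) (L.getD (b - 1) 0) =
            digitsOf d (k + 1) (L.getD (idx + 1 - 1) 0) := by
          apply prefix_eq_of_length (β i) _ _ hbpre hapre
          simp
        have : idx + 1 - 1 = idx := by omega
        rw [this, List.getD_eq_getElem L 0 hbidx, List.getD_eq_getElem L 0 hidx] at heq2
        have hval : L[b - 1] = L[idx] :=
          digitsOf_inj d (k + 1) hd1 _ _ (hvlt _ hbidx) (hvlt _ hidx) heq2
        have : b - 1 = idx := (List.Nodup.getElem_inj_iff hLnd).mp hval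
        omega
    · intro a b ha1 hab hb2
      have haidx : a - 1 < L.length := by omega
      have hbidx : b - 1 < L.length := by omega
      show lcp (digitsOf d (k + 1) (L.getD (a - 1) 0)) (digitsOf d (k + 1) (L.getD (b - 1) 0))
        = lcp (β l) (β r)
      rw [List.getD_eq_getElem L 0 haidx, List.getD_eq_getElem L 0 hbidx, hlcpβ]
      have hne : L[a - 1] ≠ L[b - 1] := by
        intro h
        have := (List.Nodup.getElem_inj_iff hLnd).mp h
        omega
      have hda := hvdiv (a - 1) haidx
      have hdb := hvdiv (b - 1) hbidx
      have hpa : w <+: digitsOf d (k + 1) (L[a - 1]) := by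
        have h := digitsOf_prefix d (k + 1) k (L[a - 1]) (by omega)
        have he : k + 1 - k = 1 := by omega
        rw [he, pow_one, hda] at h
        exact h
      have hpb : w <+: digitsOf d (k + 1) (L[b - 1]) := by
        have h := digitsOf_prefix d (k + 1) k (L[b - 1]) (by omega)
        have he : k + 1 - k = 1 := by omega
        rw [he, pow_one, hdb] at h
        exact h
      have hla' : w.length < (digitsOf d (k + 1) (L[a - 1])).length := by rw [hwlen]; simp
      have hlb' : w.length < (digitsOf d (k + 1) (L[b - 1])).length := by rw [hwlen]; simp
      have hposcalc : ∀ P : ℕ, ∀ h : w.length < (digitsOf d (k + 1) P).length,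
          (digitsOf d (k + 1) P)[w.length] = P % d := by
        intro P h
        rw [digitsOf_getElem', hwlen]
        have he : k + 1 - 1 - k = 0 := by omega
        rw [he, pow_zero, Nat.div_one]
      refine lcp_eq_of w _ _ hpa hpb hla' hlb' ?_
      rw [hposcalc _ hla', hposcalc _ hlb']
      have da := Nat.div_add_mod (L[a - 1]) d
      have db := Nat.div_add_mod (L[b - 1]) d
      rw [hda] at da
      rw [hdb] at db
      intro h
      apply hne
      omega
  · -- CASE B: d ^ (k+1) * Δ < n, only two groups, use depth t0
    have hcase' : d ^ (k + 1) * Δ < n := by omega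
    have hnD : n ≤ D := by
      rw [hD]
      exact Nat.le_mul_of_pos_left n hd0
    have hk1t : k + 1 ≤ t0 := by
      have h1 : d ^ (k + 1) * Δ ≤ D := by omega
      have h2 : d ^ (k + 1) ≤ D / Δ := (Nat.le_div_iff_mul_le hΔpos).mpr h1
      exact (Nat.le_log_iff_pow_le hd1 hDΔ0).mpr h2
    have hd_t0Δ : d ^ t0 * Δ ≤ D := by
      have h := Nat.pow_log_le_self d hDΔ0
      exact (Nat.le_div_iff_mul_le hΔpos).mp h
    have hnlt : n ≤ d ^ t0 * Δ := by
      by_contra hcon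
      push_neg at hcon
      have h1 : d ^ (t0 + 1) * Δ ≤ D := by
        have e : d ^ (t0 + 1) * Δ = d * (d ^ t0 * Δ) := by ring
        rw [e, hD]
        exact Nat.mul_le_mul_left d (by omega)
      have h2 : d ^ (t0 + 1) ≤ D / Δ := (Nat.le_div_iff_mul_le hΔpos).mpr h1
      have h3 := (Nat.le_log_iff_pow_le hd1 hDΔ0).mpr h2
      omega
    have ht0m : ∀ i, l ≤ i → i ≤ r → t0 ≤ m i := by
      intro i h1 h2
      have hg1 : 1 ≤ x (i + 1) - x i := hgpos i h1 h2
      have hg2 : x (i + 1) - x i ≤ Δ := hgΔ i h1 h2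
      have hng0 : n / (x (i + 1) - x i) ≠ 0 := by
        apply Nat.ne_of_gt
        apply Nat.div_pos _ (by omega)
        have := hxle (i + 1) (by omega) (by omega)
        omega
      have h3 : d * (d ^ (t0 - 1) * Δ) ≤ d * n := by
        have e : d * (d ^ (t0 - 1) * Δ) = d ^ t0 * Δ := by
          rw [← mul_assoc, ← pow_succ']
          congr 2
          omega
        rw [e, ← hD]
        exact hd_t0Δ
      have h4 : d ^ (t0 - 1) * Δ ≤ n := Nat.le_of_mul_le_mul_left h3 hd0
      have h5 : d ^ (t0 - 1) * (x (i + 1) - x i) ≤ n :=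
        le_trans (Nat.mul_le_mul_left _ hg2) h4
      have h6 : d ^ (t0 - 1) ≤ n / (x (i + 1) - x i) := (Nat.le_div_iff_mul_le (by omega)).mpr h5
      have h7 := (Nat.le_log_iff_pow_le hd1 hng0).mpr h6
      rw [hm i]
      omega
    set P := N l (k + 1) with hPdef
    have hCr : N r (k + 1) = P + 1 := by
      by_contra hcon
      have h2 : P + 2 ≤ N r (k + 1) := by omega
      have b1 := hNbound l (k + 1)
      have b2 := hNbound r (k + 1)
      rw [← hPdef] at b1
      have h3 : D * (P + 2) ≤ D * N r (k + 1) := Nat.mul_le_mul_left D h2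
      have h4 : D * (P + 2) = D * P + 2 * D := by ring
      have h5 : d ^ (k + 1) * X r = d ^ (k + 1) * X l + d ^ (k + 1) * Δ := by rw [hXrl, mul_add]
      omega
    set E := (P + 1) * d ^ (t0 - (k + 1)) with hEdef
    have hE1 : 1 ≤ E := Nat.mul_pos (by omega) (pow_pos hd0 _)
    have hsplit : ∀ i : ℕ, d ^ t0 * X i = d ^ (k + 1) * X i * d ^ (t0 - (k + 1)) := by
      intro i
      have e : (k + 1) + (t0 - (k + 1)) = t0 := by omega
      calc d ^ t0 * X i = d ^ ((k + 1) + (t0 - (k + 1))) * X i := by rw [e]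
      _ = d ^ (k + 1) * d ^ (t0 - (k + 1)) * X i := by rw [pow_add]
      _ = d ^ (k + 1) * X i * d ^ (t0 - (k + 1)) := by ring
    have hDE : D * E = D * (E - 1) + D := by
      have e : E - 1 + 1 = E := by omega
      calc D * E = D * (E - 1 + 1) := by rw [e]
      _ = D * (E - 1) + D := by ring
    have hEub : ∀ i, N i (k + 1) = P → d ^ t0 * X i < D * E := by
      intro i hi
      have b := hNbound i (k + 1)
      rw [hi] at b
      have h1 : d ^ (k + 1) * X i < D * (P + 1) := by
        have e : D * (P + 1) = D * P + D := by ring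
        omega
      have h2 : d ^ (k + 1) * X i * d ^ (t0 - (k + 1)) < D * (P + 1) * d ^ (t0 - (k + 1)) :=
        (Nat.mul_lt_mul_right (pow_pos hd0 _)).mpr h1
      rw [hsplit i, hEdef]
      calc d ^ (k + 1) * X i * d ^ (t0 - (k + 1)) < D * (P + 1) * d ^ (t0 - (k + 1)) := h2
      _ = D * ((P + 1) * d ^ (t0 - (k + 1))) := by ring
    have hElb : ∀ i, N i (k + 1) = P + 1 → D * E ≤ d ^ t0 * X i := by
      intro i hi
      have b := hNbound i (k + 1)
      rw [hi] at b
      have h2 : D * (P + 1) * d ^ (t0 - (k + 1)) ≤ d ^ (k + 1) * X i * d ^ (t0 - (k + 1)) :=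
        Nat.mul_le_mul_right _ b.1
      rw [hsplit i, hEdef]
      calc D * ((P + 1) * d ^ (t0 - (k + 1))) = D * (P + 1) * d ^ (t0 - (k + 1)) := by ring
      _ ≤ d ^ (k + 1) * X i * d ^ (t0 - (k + 1)) := h2
    have hNchild : ∀ i, l ≤ i → i ≤ r → N i (k + 1) = P ∨ N i (k + 1) = P + 1 := by
      intro i h1 h2
      have g1 := hNmono l i (k + 1) (le_refl l) h1 h2
      have g2 := hNmono i r (k + 1) h1 h2 (le_refl r)
      rw [hCr] at g2
      rw [← hPdef] at g1
      omega
    have hXsplit : d ^ t0 * X r = d ^ t0 * X l + d ^ t0 * Δ := by rw [hXrl, mul_add]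
    have hNlt0 : N l t0 = E - 1 := by
      have hu := hEub l rfl
      have hlower : D * (E - 1) ≤ d ^ t0 * X l := by
        have h1 := hElb r hCr
        omega
      have b := hNbound l t0
      have hlt : N l t0 < E := by
        have h : D * N l t0 < D * E := by omega
        exact lt_of_mul_lt_mul_left h (Nat.zero_le D)
      have hge : E - 1 ≤ N l t0 := by
        have h5 : D * (E - 1) < D * (N l t0 + 1) := by
          have e : D * (N l t0 + 1) = D * N l t0 + D := by ring
          omega
        have := lt_of_mul_lt_mul_left h5 (Nat.zero_le D)
        omega
      omega
    have hNrt0 : N r t0 = E := by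
      have hlow := hElb r hCr
      have hupper2 : d ^ t0 * X r < D * E + D := by
        have hu := hEub l rfl
        omega
      have b := hNbound r t0
      have hlt : N r t0 < E + 1 := by
        have h : D * N r t0 < D * (E + 1) := by
          have e : D * (E + 1) = D * E + D := by ring
          omega
        exact lt_of_mul_lt_mul_left h (Nat.zero_le D)
      have hge : E ≤ N r t0 := by
        have h : D * E < D * (N r t0 + 1) := by
          have e : D * (N r t0 + 1) = D * N r t0 + D := by ring
          omega
        have := lt_of_mul_lt_mul_left h (Nat.zero_le D)
        omega
      omega
    have hleft : ∀ i, l ≤ i → i ≤ r → N i (k + 1) = P → N i t0 = E - 1 := by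
      intro i h1 h2 hi
      have hu := hEub i hi
      have hge : E - 1 ≤ N i t0 := by
        rw [← hNlt0]
        exact hNmono l i t0 (le_refl l) h1 h2
      have b := hNbound i t0
      have hlt : N i t0 < E := by
        have h : D * N i t0 < D * E := by omega
        exact lt_of_mul_lt_mul_left h (Nat.zero_le D)
      omega
    have hright : ∀ i, l ≤ i → i ≤ r → N i (k + 1) = P + 1 → N i t0 = E := by
      intro i h1 h2 hi
      have hlow := hElb i hi
      have b := hNbound i t0
      have hge : E ≤ N i t0 := by
        have h : D * E < D * (N i t0 + 1) := by
          have e : D * (N i t0 + 1) = D * N i t0 + D := by ring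
          omega
        have := lt_of_mul_lt_mul_left h (Nat.zero_le D)
        omega
      have hle : N i t0 ≤ N r t0 := hNmono i r t0 h1 h2 (le_refl r)
      rw [hNrt0] at hle
      omega
    have hvne : digitsOf d t0 (E - 1) ≠ digitsOf d t0 E := by
      intro h
      have h1 : E - 1 < d ^ t0 := by
        rw [← hNlt0]
        exact hNlt l t0 (le_refl l) (by omega)
      have h2 : E < d ^ t0 := by
        rw [← hNrt0]
        exact hNlt r t0 (by omega) (le_refl r)
      have := digitsOf_inj d t0 hd1 _ _ h1 h2 h
      omega
    refine ⟨2, hd, fun a => if a ≤ 1 then digitsOf d t0 (E - 1) else digitsOf d t0 E,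
      ?_, ?_, ?_, ?_⟩
    · intro a ha1 ha2
      constructor
      · dsimp only
        split <;> exact digitsOf_mem_lt d t0 _ hd0
      · dsimp only
        split <;> (rw [digitsOf_length]; exact hlogb t0 hnlt)
    · intro a ha1 ha2
      dsimp only
      by_cases ha : a ≤ 1
      · refine ⟨l, le_refl l, by omega, ?_⟩
        rw [if_pos ha, ← hNlt0]
        exact hpre l t0 (ht0m l (le_refl l) (by omega))
      · refine ⟨r, by omega, le_refl r, ?_⟩
        rw [if_neg ha, ← hNrt0]
        exact hpre r t0 (ht0m r (by omega) (le_refl r))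
    · intro i h1 h2
      rcases hNchild i h1 h2 with hc | hc
      · have hp1 : digitsOf d t0 (E - 1) <+: β i := by
          rw [← hleft i h1 h2 hc]
          exact hpre i t0 (ht0m i h1 h2)
        refine ⟨1, ⟨⟨le_refl 1, by omega⟩, ?_⟩, ?_⟩
        · show (if (1 : ℕ) ≤ 1 then digitsOf d t0 (E - 1) else digitsOf d t0 E) <+: β i
          rw [if_pos (le_refl 1)]
          exact hp1
        · rintro b ⟨⟨hb1, hb2⟩, hbpre⟩
          by_contra hbne
          have hb2' : ¬ b ≤ 1 := by omega
          replace hbpre : (if b ≤ 1 then digitsOf d t0 (E - 1) else digitsOf d t0 E) <+: β i :=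
            hbpre
          rw [if_neg hb2'] at hbpre
          exact hvne (prefix_eq_of_length (β i) _ _ hp1 hbpre (by simp))
      · have hp2 : digitsOf d t0 E <+: β i := by
          rw [← hright i h1 h2 hc]
          exact hpre i t0 (ht0m i h1 h2)
        refine ⟨2, ⟨⟨by omega, le_refl 2⟩, ?_⟩, ?_⟩
        · show (if (2 : ℕ) ≤ 1 then digitsOf d t0 (E - 1) else digitsOf d t0 E) <+: β i
          rw [if_neg (by omega)]
          exact hp2
        · rintro b ⟨⟨hb1, hb2⟩, hbpre⟩
          by_contra hbne
          have hb1' : b ≤ 1 := by omega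
          replace hbpre : (if b ≤ 1 then digitsOf d t0 (E - 1) else digitsOf d t0 E) <+: β i :=
            hbpre
          rw [if_pos hb1'] at hbpre
          exact hvne (prefix_eq_of_length (β i) _ _ hbpre hp2 (by simp))
    · intro a b ha1 hab hb2
      have ha : a = 1 := by omega
      have hb : b = 2 := by omega
      rw [ha, hb]
      show lcp (if (1 : ℕ) ≤ 1 then digitsOf d t0 (E - 1) else digitsOf d t0 E)
        (if (2 : ℕ) ≤ 1 then digitsOf d t0 (E - 1) else digitsOf d t0 E) = lcp (β l) (β r)
      rw [if_pos (le_refl 1), if_neg (by omega), hlcpβ]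
      have hpa : w <+: digitsOf d t0 (E - 1) := by
        have h := digitsOf_prefix d t0 k (N l t0) (by omega)
        rw [hNdiv l t0 k (by omega), ← hwdef, hNlt0] at h
        exact h
      have hpb : w <+: digitsOf d t0 E := by
        have h := digitsOf_prefix d t0 k (N r t0) (by omega)
        rw [hNdiv r t0 k (by omega), hNik r (by omega) (le_refl r), ← hwdef, hNrt0] at h
        exact h
      have hla' : w.length < (digitsOf d t0 (E - 1)).length := by
        rw [hwlen, digitsOf_length]
        omega
      have hlb' : w.length < (digitsOf d t0 E).length := by
        rw [hwlen, digitsOf_length]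
        omega
      refine lcp_eq_of w _ _ hpa hpb hla' hlb' ?_
      have ea : (digitsOf d t0 (E - 1))[w.length]'hla' = N l (k + 1) % d := by
        rw [digitsOf_getElem', hwlen, ← hNlt0]
        have he : t0 - 1 - k = t0 - (k + 1) := by omega
        rw [he, hNdiv l t0 (k + 1) hk1t]
      have eb : (digitsOf d t0 E)[w.length]'hlb' = N r (k + 1) % d := by
        rw [digitsOf_getElem', hwlen, ← hNrt0]
        have he : t0 - 1 - k = t0 - (k + 1) := by omega
        rw [he, hNdiv r t0 (k + 1) hk1t]
      rw [ea, eb]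
      exact hmodne
end

section
/- Let S[1..n] be a string with an α-contracting parsing, where α is a real number with 0 < α < 1. Then every position q has finite height; moreover, if q lies in a non-explicit phrase of length L, then L ≤ ℓ_q and h_q ≤ ⌊log_{1/α} L⌋ + 1 ≤ ⌊log_{1/α} ℓ_q⌋ + 1. -/
/-- A parsing of the string `S[1..n]` (represented as a list, positions 1-based):
phrase boundaries `1 = x 1 < x 2 < ⋯ < x (t+1) = n+1`; the `i`-th phrase is
`S[x i .. x (i+1) − 1]`.  Each phrase is either explicit, or is assigned a source
starting position `src i` with `S[src i .. src i + len i − 1] = S[x i .. x (i+1) − 1]`. -/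
structure Parsing (γ : Type) (S : List γ) : Type where
  t : ℕ
  x : ℕ → ℕ
  isExplicit : ℕ → Prop
  src : ℕ → ℕ
  x_first : x 1 = 1
  x_last : x (t + 1) = S.length + 1
  x_mono : ∀ i, 1 ≤ i → i ≤ t → x i < x (i + 1)
  src_pos : ∀ i, 1 ≤ i → i ≤ t → ¬ isExplicit i → 1 ≤ src i
  src_inside : ∀ i, 1 ≤ i → i ≤ t → ¬ isExplicit i →
    src i + (x (i + 1) - x i) ≤ S.length + 1
  src_eq : ∀ i, 1 ≤ i → i ≤ t → ¬ isExplicit i →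
    ∀ o, o < x (i + 1) - x i → S[src i + o - 1]? = S[x i + o - 1]?

namespace Parsing

variable {γ : Type} {S : List γ}

/-- The length of the `i`-th phrase. -/
def len (P : Parsing γ S) (i : ℕ) : ℕ := P.x (i + 1) - P.x i

/-- Position `q` lies in the `i`-th phrase. -/
def InPhrase (P : Parsing γ S) (i q : ℕ) : Prop :=
  1 ≤ i ∧ i ≤ P.t ∧ P.x i ≤ q ∧ q < P.x (i + 1)

/-- The map `f` sends a position `q` lying in a non-explicit phrase `i` to
`src i + (q − x i)`; elsewhere it is the identity. -/
noncomputable def f (P : Parsing γ S) (q : ℕ) : ℕ :=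
  @dite ℕ (∃ i, P.InPhrase i q ∧ ¬ P.isExplicit i) (Classical.dec _)
    (fun h => P.src h.choose + (q - P.x h.choose)) (fun _ => q)

/-- Position `q` lies in an explicit phrase. -/
def ExplicitPos (P : Parsing γ S) (q : ℕ) : Prop :=
  ∃ i, P.InPhrase i q ∧ P.isExplicit i

/-- `h` is the height of position `q`: the least `h ≥ 0` such that `f^[h] q` lies in an
explicit phrase. -/
def HeightIs (P : Parsing γ S) (q h : ℕ) : Prop :=
  P.ExplicitPos (P.f^[h] q) ∧ ∀ h' < h, ¬ P.ExplicitPos (P.f^[h'] q)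

/-- The parsing is `α`-contracting: for every non-explicit phrase `i`, every phrase `j`
whose interval `[x j, x (j+1))` intersects the source interval `[src i, src i + len i)`
satisfies `len j ≤ α · len i`. -/
def Contracting (P : Parsing γ S) (α : ℝ) : Prop :=
  ∀ i j, 1 ≤ i → i ≤ P.t → ¬ P.isExplicit i → 1 ≤ j → j ≤ P.t →
    max (P.x j) (P.src i) < min (P.x (j + 1)) (P.src i + P.len i) →
    (P.len j : ℝ) ≤ α * (P.len i : ℝ)



variable {γ : Type} {S : List γ}

lemma x_le_x (P : Parsing γ S) {a b : ℕ} (ha : 1 ≤ a) (hab : a ≤ b) (hb : b ≤ P.t + 1) :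
    P.x a ≤ P.x b := by
  induction b with
  | zero => omega
  | succ b ih =>
    rcases eq_or_lt_of_le hab with rfl | h
    · exact le_rfl
    · have h1 := ih (by omega) (by omega)
      have h2 := P.x_mono b (by omega) (by omega)
      omega

lemma x_lt_x (P : Parsing γ S) {a b : ℕ} (ha : 1 ≤ a) (hab : a < b) (hb : b ≤ P.t + 1) :
    P.x a < P.x b := by
  obtain ⟨c, rfl⟩ : ∃ c, b = c + 1 := ⟨b - 1, by omega⟩
  have h1 := P.x_le_x ha (by omega) (b := c) (by omega)
  have h2 := P.x_mono c (by omega) (by omega)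
  omega

lemma phrase_unique (P : Parsing γ S) {i j q : ℕ} (hi : P.InPhrase i q)
    (hj : P.InPhrase j q) : i = j := by
  obtain ⟨hi1, hi2, hi3, hi4⟩ := hi
  obtain ⟨hj1, hj2, hj3, hj4⟩ := hj
  rcases lt_trichotomy i j with h | h | h
  · have := P.x_le_x (a := i + 1) (b := j) (by omega) (by omega) (by omega); omega
  · exact h
  · have := P.x_le_x (a := j + 1) (b := i) (by omega) (by omega) (by omega); omega

lemma exists_phrase (P : Parsing γ S) {q : ℕ} (h1 : 1 ≤ q) (h2 : q ≤ S.length) :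
    ∃ i, P.InPhrase i q := by
  classical
  have ht : 1 ≤ P.t := by
    by_contra h
    have h0 : P.t = 0 := by omega
    have := P.x_last
    rw [h0, P.x_first] at this
    omega
  set Q : ℕ → Prop := fun i => 1 ≤ i ∧ P.x i ≤ q with hQ
  have hQ1 : Q 1 := ⟨le_rfl, by rw [P.x_first]; exact h1⟩
  set i := Nat.findGreatest Q P.t with hi
  have hspec : Q i := Nat.findGreatest_spec ht hQ1
  have hle : i ≤ P.t := Nat.findGreatest_le (P := Q) P.t
  refine ⟨i, hspec.1, hle, hspec.2, ?_⟩
  by_cases hit : i = P.t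
  · rw [hit, P.x_last]; omega
  · have := Nat.findGreatest_is_greatest (P := Q) (n := P.t) (k := i + 1) (by omega) (by omega)
    simp only [hQ, not_and, not_le] at this
    exact this (by omega)

lemma f_eq (P : Parsing γ S) {i q : ℕ} (hi : P.InPhrase i q) (hne : ¬ P.isExplicit i) :
    P.f q = P.src i + (q - P.x i) := by
  unfold f
  have hex : ∃ j, P.InPhrase j q ∧ ¬ P.isExplicit j := ⟨i, hi, hne⟩
  rw [dif_pos hex]
  have h2 := hex.choose_spec
  have h3 : hex.choose = i := P.phrase_unique h2.1 hi
  rw [h3]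

lemma len_pos (P : Parsing γ S) {i : ℕ} (h1 : 1 ≤ i) (h2 : i ≤ P.t) : 1 ≤ P.len i := by
  have := P.x_mono i h1 h2; unfold len; omega

lemma q_le_length (P : Parsing γ S) {i q : ℕ} (hi : P.InPhrase i q) :
    1 ≤ q ∧ q ≤ S.length := by
  obtain ⟨hi1, hi2, hi3, hi4⟩ := hi
  have hx1 : 1 ≤ P.x i := by
    have := P.x_le_x (a := 1) (b := i) le_rfl hi1 (by omega); rw [P.x_first] at this; omega
  have hx2 : P.x (i + 1) ≤ S.length + 1 := by
    have := P.x_le_x (a := i + 1) (b := P.t + 1) (by omega) (by omega) le_rfl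
    rw [P.x_last] at this; omega
  omega

lemma step (P : Parsing γ S) {α : ℝ} (hc : P.Contracting α) {i q : ℕ}
    (hi : P.InPhrase i q) (hne : ¬ P.isExplicit i) :
    ∃ j, P.InPhrase j (P.f q) ∧ (P.len j : ℝ) ≤ α * (P.len i : ℝ) := by
  have hf := P.f_eq hi hne
  have hsrc1 := P.src_pos i hi.1 hi.2.1 hne
  have hsrc2 := P.src_inside i hi.1 hi.2.1 hne
  obtain ⟨hi1, hi2, hi3, hi4⟩ := hi
  have hlen : P.len i = P.x (i + 1) - P.x i := rfl
  have h1 : P.src i ≤ P.f q := by rw [hf]; omega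
  have h2 : P.f q < P.src i + P.len i := by rw [hf, hlen]; omega
  have hfle : P.f q ≤ S.length := by rw [hlen] at h2; omega
  obtain ⟨j, hj⟩ := P.exists_phrase (q := P.f q) (by omega) hfle
  refine ⟨j, hj, ?_⟩
  apply hc i j hi1 hi2 hne hj.1 hj.2.1
  have h3 := hj.2.2.1
  have h4 := hj.2.2.2
  simp only [max_lt_iff, lt_min_iff]
  omega

lemma chain (P : Parsing γ S) {α : ℝ} (hc : P.Contracting α) (hα0 : 0 < α) {i q : ℕ}
    (hi : P.InPhrase i q) (hne : ¬ P.isExplicit i) :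
    ∀ k, (∀ h' ≤ k, ¬ P.ExplicitPos (P.f^[h'] q)) →
      ∃ j, P.InPhrase j (P.f^[k] q) ∧ ¬ P.isExplicit j ∧
        (P.len j : ℝ) ≤ α ^ k * (P.len i : ℝ) := by
  intro k
  induction k with
  | zero => intro _; exact ⟨i, by simpa using hi, hne, by simp⟩
  | succ k ih =>
    intro hk
    obtain ⟨j, hj, hjne, hjlen⟩ := ih (fun h' h => hk h' (by omega))
    obtain ⟨j', hj', hlen'⟩ := P.step hc hj hjne
    have hj'' : P.InPhrase j' (P.f^[k + 1] q) := by
      rw [Function.iterate_succ_apply']; exact hj'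
    refine ⟨j', hj'', ?_, ?_⟩
    · intro hexpl
      exact hk (k + 1) le_rfl ⟨j', hj'', hexpl⟩
    · calc (P.len j' : ℝ) ≤ α * (P.len j : ℝ) := hlen'
        _ ≤ α * (α ^ k * (P.len i : ℝ)) := by
            exact mul_le_mul_of_nonneg_left hjlen hα0.le
        _ = α ^ (k + 1) * (P.len i : ℝ) := by ring

lemma exists_height (P : Parsing γ S) {α : ℝ} (hc : P.Contracting α) (hα0 : 0 < α)
    (hα1 : α < 1) : ∀ q, 1 ≤ q → q ≤ S.length → ∃ h, P.ExplicitPos (P.f^[h] q) := by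
  suffices H : ∀ L q i, P.InPhrase i q → P.len i ≤ L → ∃ h, P.ExplicitPos (P.f^[h] q) by
    intro q h1 h2
    obtain ⟨i, hi⟩ := P.exists_phrase h1 h2
    exact H (P.len i) q i hi le_rfl
  intro L
  induction L using Nat.strong_induction_on with
  | _ L ih =>
    intro q i hi hL
    by_cases hexp : P.isExplicit i
    · exact ⟨0, i, by simpa using hi, hexp⟩
    · obtain ⟨j, hj, hjlen⟩ := P.step hc hi hexp
      have hipos : 1 ≤ P.len i := P.len_pos hi.1 hi.2.1
      have hlt : P.len j < P.len i := by
        have h1 : (P.len j : ℝ) < (P.len i : ℝ) := by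
          calc (P.len j : ℝ) ≤ α * (P.len i : ℝ) := hjlen
            _ < 1 * (P.len i : ℝ) := by
                apply mul_lt_mul_of_pos_right hα1
                exact_mod_cast hipos
            _ = (P.len i : ℝ) := one_mul _
        exact_mod_cast h1
      obtain ⟨h, hh⟩ := ih (P.len j) (by omega) (P.f q) j hj le_rfl
      refine ⟨h + 1, ?_⟩
      rwa [Function.iterate_succ_apply]


lemma src_take_eq (P : Parsing γ S) {i : ℕ} (h1 : 1 ≤ i) (h2 : i ≤ P.t)
    (hne : ¬ P.isExplicit i) :
    (S.drop (P.src i - 1)).take (P.len i) = (S.drop (P.x i - 1)).take (P.len i) := by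
  have hsrc1 := P.src_pos i h1 h2 hne
  have hx1 : 1 ≤ P.x i := by
    have := P.x_le_x (a := 1) (b := i) le_rfl h1 (by omega); rw [P.x_first] at this; omega
  apply List.ext_getElem?
  intro o
  rw [List.getElem?_take, List.getElem?_take, List.getElem?_drop, List.getElem?_drop]
  by_cases ho : o < P.len i
  · simp only [ho, if_pos]
    have hs := P.src_eq i h1 h2 hne o ho
    have e1 : P.src i - 1 + o = P.src i + o - 1 := by omega
    have e2 : P.x i - 1 + o = P.x i + o - 1 := by omega
    rw [e1, e2]; exact hs
  · simp [ho]

end Parsing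

/-- `occursAt U V p`: the string `U` occurs in `V` starting at (1-based) position `p`. -/
def occursAt {γ : Type} (U V : List γ) (p : ℕ) : Prop :=
  1 ≤ p ∧ p + U.length ≤ V.length + 1 ∧ (V.drop (p - 1)).take U.length = U

/-- The set of lengths of substrings of `S` that contain (1-based) position `q` and occur
at least twice in `S`. -/
def repeatedLensAt {γ : Type} (S : List γ) (q : ℕ) : Set ℕ :=
  {len | ∃ a : ℕ, 1 ≤ a ∧ a ≤ q ∧ q ≤ a + len - 1 ∧ a + len ≤ S.length + 1 ∧
    ∃ p₁ p₂ : ℕ, p₁ ≠ p₂ ∧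
      occursAt ((S.drop (a - 1)).take len) S p₁ ∧
      occursAt ((S.drop (a - 1)).take len) S p₂}

/-- Let `S` have an `α`-contracting parsing with `0 < α < 1`.  Then every
position has finite height; moreover, if `q` lies in a non-explicit phrase of length
`L`, then `L ≤ ℓ_q` and `h_q ≤ ⌊log_{1/α} L⌋ + 1 ≤ ⌊log_{1/α} ℓ_q⌋ + 1`, where `ℓ_q` is
the maximum length of a substring of `S` containing position `q` that occurs at least
twice in `S`. -/
theorem contracting_parse_heights {γ : Type} (S : List γ) (P : Parsing γ S) (α : ℝ)
    (hα0 : 0 < α) (hα1 : α < 1) (hc : P.Contracting α) :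
    (∀ q, 1 ≤ q → q ≤ S.length → ∃ h, P.ExplicitPos (P.f^[h] q)) ∧
    ∀ q i, P.InPhrase i q → ¬ P.isExplicit i →
      ∀ ℓq : ℕ, IsGreatest (repeatedLensAt S q) ℓq →
        P.len i ≤ ℓq ∧
        (∀ h : ℕ, P.HeightIs q h →
          (h : ℤ) ≤ ⌊Real.logb (1 / α) ((P.len i : ℝ))⌋ + 1) ∧
        ⌊Real.logb (1 / α) ((P.len i : ℝ))⌋ + 1 ≤ ⌊Real.logb (1 / α) ((ℓq : ℝ))⌋ + 1 := by
  have hb : (1:ℝ) < 1 / α := by rw [lt_div_iff₀ hα0]; linarith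
  constructor
  · exact P.exists_height hc hα0 hα1
  · intro q i hi hne ℓq hℓ
    have hipos : 1 ≤ P.len i := P.len_pos hi.1 hi.2.1
    have hi1 : 1 ≤ i := hi.1
    have hit : i ≤ P.t := hi.2.1
    have hlen_def : P.len i = P.x (i + 1) - P.x i := rfl
    have hxlen : P.x (i + 1) = P.x i + P.len i := by
      have := P.x_mono i hi.1 hi.2.1
      omega
    have hx1 : 1 ≤ P.x i := by
      have := P.x_le_x (a := 1) (b := i) le_rfl hi.1 (by omega)
      rw [P.x_first] at this; omega
    have hx2 : P.x i + P.len i ≤ S.length + 1 := by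
      rw [← hxlen]
      have := P.x_le_x (a := i + 1) (b := P.t + 1) (by omega) (by omega) le_rfl
      rw [P.x_last] at this; omega
    have hsrc1 := P.src_pos i hi.1 hi.2.1 hne
    have hsrc2 : P.src i + P.len i ≤ S.length + 1 := P.src_inside i hi.1 hi.2.1 hne
    have hlen1 : (1:ℝ) ≤ (P.len i : ℝ) := by exact_mod_cast hipos
    have hneq : P.x i ≠ P.src i := by
      intro heq
      have hcond : max (P.x i) (P.src i) < min (P.x (i + 1)) (P.src i + P.len i) := by
        rw [← heq, hxlen]
        simp only [max_self, min_self]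
        omega
      have hle := hc i i hi.1 hi.2.1 hne hi.1 hi.2.1 hcond
      nlinarith
    have hUlen : ((S.drop (P.x i - 1)).take (P.len i)).length = P.len i := by
      rw [List.length_take, List.length_drop]
      omega
    have hmem : P.len i ∈ repeatedLensAt S q := by
      refine ⟨P.x i, hx1, hi.2.2.1, ?_, hx2, P.x i, P.src i, hneq, ?_, ?_⟩
      · have := hi.2.2.2; omega
      · exact ⟨hx1, by rw [hUlen]; exact hx2, by rw [hUlen]⟩
      · refine ⟨hsrc1, by rw [hUlen]; exact hsrc2, ?_⟩
        rw [hUlen]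
        exact P.src_take_eq hi.1 hi.2.1 hne
    have hLle : P.len i ≤ ℓq := hℓ.2 hmem
    refine ⟨hLle, ?_, ?_⟩
    · intro h hh
      have hh1 : 1 ≤ h := by
        rcases Nat.eq_zero_or_pos h with rfl | h1
        · exfalso
          have := hh.1
          simp only [Function.iterate_zero_apply] at this
          obtain ⟨j, hj, hje⟩ := this
          have hji : j = i := P.phrase_unique hj hi
          rw [hji] at hje
          exact hne hje
        · exact h1
      obtain ⟨j, hj, hjne, hjlen⟩ :=
        P.chain hc hα0 hi hne (h - 1) (fun h' hh' => hh.2 h' (by omega))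
      have hjpos : (1:ℝ) ≤ (P.len j : ℝ) := by exact_mod_cast P.len_pos hj.1 hj.2.1
      have hP : (1:ℝ) ≤ α ^ (h - 1) * (P.len i : ℝ) := le_trans hjpos hjlen
      have hpow : (1 / α) ^ (h - 1) ≤ (P.len i : ℝ) := by
        rw [div_pow, one_pow, div_le_iff₀ (pow_pos hα0 _)]
        nlinarith
      have hlog : ((h : ℝ) - 1) ≤ Real.logb (1 / α) ((P.len i : ℝ)) := by
        have heq : Real.logb (1 / α) ((1 / α) ^ (h - 1)) = ((h - 1 : ℕ) : ℝ) := by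
          rw [Real.logb_pow, Real.logb_self_eq_one hb]
          ring
        have h2 : Real.logb (1 / α) ((1 / α) ^ (h - 1)) ≤
            Real.logb (1 / α) ((P.len i : ℝ)) :=
          Real.logb_le_logb_of_le hb (pow_pos (by linarith) _) hpow
        rw [heq, Nat.cast_sub hh1, Nat.cast_one] at h2
        exact h2
      have hfloor : ((h : ℤ) - 1) ≤ ⌊Real.logb (1 / α) ((P.len i : ℝ))⌋ :=
        Int.le_floor.2 (by push_cast; linarith)
      linarith
    · have h0 : (0:ℝ) < (P.len i : ℝ) := by linarith
      have hmono : Real.logb (1 / α) ((P.len i : ℝ)) ≤ Real.logb (1 / α) ((ℓq : ℝ)) :=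
        Real.logb_le_logb_of_le hb h0 (by exact_mod_cast hLle)
      exact add_le_add_left (Int.floor_le_floor hmono) 1
end

section
/- Let X be a finite set of natural numbers, let q and W be natural numbers with W ≥ 1, and let a = ⌊q/W⌋. Suppose a ≥ 2 and no element of X ∪ {0} lies in the interval [(a−1)·W, (a+1)·W). Then q − q⁻ > W, where q⁻ = max{x ∈ X ∪ {0} : x ≤ q} is the predecessor of q in X ∪ {0}. -/
/-- Let `X` be a finite set of naturals, `q, W` naturals with `W ≥ 1`, and
`a = ⌊q/W⌋`. Suppose `a ≥ 2` and no element of `X ∪ {0}` lies in `[(a−1)·W, (a+1)·W)`.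
Then `q − q⁻ > W`, where `q⁻` is the predecessor of `q` in `X ∪ {0}`. -/
theorem predecessor_distance (X : Finset ℕ) (q W : ℕ) (hW : 1 ≤ W)
    (a : ℕ) (ha : a = q / W) (ha2 : 2 ≤ a)
    (hX : ∀ y ∈ insert 0 X, ¬ ((a - 1) * W ≤ y ∧ y < (a + 1) * W))
    (qpred : ℕ)
    (hmem : qpred ∈ insert 0 X) (hle : qpred ≤ q)
    (hmax : ∀ y ∈ insert 0 X, y ≤ q → y ≤ qpred) :
    W < q - qpred := by
  have h1 : a * W ≤ q := by
    rw [ha]; exact Nat.div_mul_le_self q W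
  have h2 : q < (a + 1) * W := by
    have hdm := Nat.div_add_mod q W
    have hm : q % W < W := Nat.mod_lt q hW
    rw [ha, add_mul, one_mul, Nat.mul_comm]
    omega
  have h3 := hX qpred hmem
  have hlt : qpred < (a - 1) * W := by
    by_contra h
    exact h3 ⟨le_of_not_gt h, lt_of_le_of_lt hle h2⟩
  have h4 : (a - 1) * W + W = a * W := by
    conv_rhs => rw [show a = a - 1 + 1 by omega]
    rw [add_mul, one_mul]
  omega
end
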